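/- Let a and b be positive integers with a odd. Then for every nonnegative integer n, t(a,3a,4b;4n+6a) = 2·t(a,12a,b;n) and t(a,3a,4b;4n+3a) = 2·t(3a,4a,b;n). -/
import Mathlib


def tri (x : ℤ) : ℤ := x * (x + 1) / 2

noncomputable def N (a b c n : ℕ) : ℕ :=
  Nat.card {p : ℤ × ℤ × ℤ // (n : ℤ) = a * p.1 ^ 2 + b * p.2.1 ^ 2 + c * p.2.2 ^ 2}

noncomputable def t (a b c n : ℕ) : ℕ :=
  Nat.card {p : ℤ × ℤ × ℤ // (n : ℤ) = a * tri p.1 + b * tri p.2.1 + c * tri p.2.2}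

noncomputable def T (a b c n : ℕ) : ℕ :=
  Nat.card {p : ℕ × ℕ × ℕ // (n : ℤ) = a * tri p.1 + b * tri p.2.1 + c * tri p.2.2}


lemma two_tri (x : ℤ) : 2 * tri x = x * (x + 1) := by
  obtain ⟨k, hk⟩ := Int.even_mul_succ_self x
  unfold tri; rw [hk]; omega

lemma eight_tri (x : ℤ) : 8 * tri x = (2*x+1)^2 - 1 := by
  linear_combination 4 * two_tri x

lemma tri_to_sq (A B C m x y z : ℤ) (h : m = A * tri x + B * tri y + C * tri z) :
    8*m + (A + B + C) = A*(2*x+1)^2 + B*(2*y+1)^2 + C*(2*z+1)^2 := by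
  linear_combination 8*h + A * eight_tri x + B * eight_tri y + C * eight_tri z

lemma sq_to_tri (A B C m x y z : ℤ)
    (h : 8*m + (A + B + C) = A*(2*x+1)^2 + B*(2*y+1)^2 + C*(2*z+1)^2) :
    m = A * tri x + B * tri y + C * tri z := by
  have h2 : 8*m = 8*(A * tri x + B * tri y + C * tri z) := by
    linear_combination h - A * eight_tri x - B * eight_tri y - C * eight_tri z
  omega

lemma extract (a b m c u v Z : ℤ) (ha : a % 2 = 1) (hZ : Z % 2 = 1)
    (hsq : a*u^2 + 3*a*v^2 + b*Z^2 = 8*m + c*a + b) : 8 ∣ u^2 + 3*v^2 - c := by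
  obtain ⟨z, rfl⟩ : ∃ z, Z = 2*z+1 := ⟨(Z-1)/2, by omega⟩
  obtain ⟨j, rfl⟩ : ∃ j, a = 2*j+1 := ⟨(a-1)/2, by omega⟩
  obtain ⟨w, hw⟩ : ∃ w, (2*z+1)^2 = 8*w+1 := ⟨tri z, by linear_combination -eight_tri z⟩
  obtain ⟨e, he⟩ : ∃ e, (2*j+1)^2 = 8*e+1 := ⟨tri j, by linear_combination -eight_tri j⟩
  refine ⟨(2*j+1)*m - (2*j+1)*b*w - e*(u^2+3*v^2-c), ?_⟩
  linear_combination (2*j+1)*hsq - (2*j+1)*b*hw - (u^2+3*v^2-c)*he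

lemma key13 (u v : ℤ) (h : 8 ∣ u^2 + 3*v^2 - 13) : u % 2 = 1 ∧ v % 4 = 2 := by
  have hu : u^2 % 8 = (u % 8)^2 % 8 := by rw [pow_two, pow_two, Int.mul_emod]
  have hv : v^2 % 8 = (v % 8)^2 % 8 := by rw [pow_two, pow_two, Int.mul_emod]
  have h1 : u % 8 = 0 ∨ u % 8 = 1 ∨ u % 8 = 2 ∨ u % 8 = 3 ∨ u % 8 = 4 ∨ u % 8 = 5 ∨ u % 8 = 6 ∨ u % 8 = 7 := by omega
  have h2 : v % 8 = 0 ∨ v % 8 = 1 ∨ v % 8 = 2 ∨ v % 8 = 3 ∨ v % 8 = 4 ∨ v % 8 = 5 ∨ v % 8 = 6 ∨ v % 8 = 7 := by omega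
  rcases h1 with h1|h1|h1|h1|h1|h1|h1|h1 <;> rcases h2 with h2|h2|h2|h2|h2|h2|h2|h2 <;>
    rw [h1] at hu <;> rw [h2] at hv <;> norm_num at hu hv <;> omega

lemma key7 (u v : ℤ) (h : 8 ∣ u^2 + 3*v^2 - 7) : u % 4 = 2 ∧ v % 2 = 1 := by
  have hu : u^2 % 8 = (u % 8)^2 % 8 := by rw [pow_two, pow_two, Int.mul_emod]
  have hv : v^2 % 8 = (v % 8)^2 % 8 := by rw [pow_two, pow_two, Int.mul_emod]
  have h1 : u % 8 = 0 ∨ u % 8 = 1 ∨ u % 8 = 2 ∨ u % 8 = 3 ∨ u % 8 = 4 ∨ u % 8 = 5 ∨ u % 8 = 6 ∨ u % 8 = 7 := by omega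
  have h2 : v % 8 = 0 ∨ v % 8 = 1 ∨ v % 8 = 2 ∨ v % 8 = 3 ∨ v % 8 = 4 ∨ v % 8 = 5 ∨ v % 8 = 6 ∨ v % 8 = 7 := by omega
  rcases h1 with h1|h1|h1|h1|h1|h1|h1|h1 <;> rcases h2 with h2|h2|h2|h2|h2|h2|h2|h2 <;>
    rw [h1] at hu <;> rw [h2] at hv <;> norm_num at hu hv <;> omega

lemma mem1 (A B m p q r y : ℤ) (hy : y = p - 2*q - 1 ∨ y = 2*q - p)
    (h : m = A * tri p + 12*A * tri q + B * tri r) :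
    4*m + 6*A = A * tri (p + 6*q + 3) + 3*A * tri y + 4*B * tri r := by
  have h8 := tri_to_sq A (12*A) B m p q r h
  refine sq_to_tri _ _ _ _ _ _ _ ?_
  rcases hy with rfl | rfl <;> linear_combination 4 * h8

lemma part1 (a b n : ℕ) (ha : (a:ℤ) % 2 = 1) :
    t a (3*a) (4*b) (4*n+6*a) = 2 * t a (12*a) b n := by
  have e : (Bool × {p : ℤ × ℤ × ℤ // ((n:ℕ) : ℤ) = ↑a * tri p.1 + ↑(12*a) * tri p.2.1 + ↑b * tri p.2.2}) ≃
      {p : ℤ × ℤ × ℤ // ((4*n+6*a : ℕ) : ℤ) = ↑a * tri p.1 + ↑(3*a) * tri p.2.1 + ↑(4*b) * tri p.2.2} := by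
    refine Equiv.ofBijective (fun w =>
      ⟨(w.2.1.1 + 6*w.2.1.2.1 + 3,
        cond w.1 (2*w.2.1.2.1 - w.2.1.1) (w.2.1.1 - 2*w.2.1.2.1 - 1),
        w.2.1.2.2), ?_⟩) ⟨?_, ?_⟩
    · obtain ⟨ε, ⟨⟨p,q,r⟩, h⟩⟩ := w
      push_cast at h ⊢
      have h' : (n:ℤ) = (a:ℤ) * tri p + 12*(a:ℤ) * tri q + (b:ℤ) * tri r := by
        linear_combination h
      cases ε <;> simp only [Bool.cond_true, Bool.cond_false] <;>
        [ linear_combination mem1 (a:ℤ) b n p q r _ (Or.inl rfl) h';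
          linear_combination mem1 (a:ℤ) b n p q r _ (Or.inr rfl) h' ]
    · rintro ⟨ε1, ⟨⟨p,q,r⟩, h1⟩⟩ ⟨ε2, ⟨⟨p',q',r'⟩, h2⟩⟩ heq
      simp only [Subtype.mk.injEq, Prod.mk.injEq] at heq
      cases ε1 <;> cases ε2 <;>
        simp only [Bool.cond_true, Bool.cond_false] at heq <;>
        simp only [Prod.mk.injEq, Subtype.mk.injEq, Bool.false_eq_true, Bool.true_eq_false,
          false_and, true_and] <;>
        omega
    · rintro ⟨⟨x,y,z⟩, hxyz⟩
      push_cast at hxyz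
      have h8 := tri_to_sq (a:ℤ) (3*(a:ℤ)) (4*(b:ℤ)) (4*(n:ℤ)+6*(a:ℤ)) x y z (by linear_combination hxyz)
      by_cases hpar : (x + y) % 2 = 0
      · obtain ⟨u, rfl⟩ : ∃ u, x = 2*u - 3*y - 2 := ⟨(x+3*y+2)/2, by omega⟩
        have h4 : 4*((a:ℤ)*u^2 + 3*(a:ℤ)*(u-2*y-1)^2 + (b:ℤ)*(2*z+1)^2)
            = 4*(8*(n:ℤ) + 13*(a:ℤ) + (b:ℤ)) := by linear_combination -h8
        have hsq := mul_left_cancel₀ (by norm_num : (4:ℤ) ≠ 0) h4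
        have hd := extract (a:ℤ) b n 13 u (u-2*y-1) (2*z+1) ha (by omega) hsq
        obtain ⟨hu2, hv4⟩ := key13 u (u-2*y-1) hd
        obtain ⟨p, rfl⟩ : ∃ p, u = 2*p+1 := ⟨(u-1)/2, by omega⟩
        obtain ⟨q, rfl⟩ : ∃ q, y = p - 2*q - 1 := ⟨(p - y - 1)/2, by omega⟩
        refine ⟨(false, ⟨(p, q, z), ?_⟩), ?_⟩
        · push_cast
          refine sq_to_tri _ _ _ _ _ _ _ ?_
          linear_combination -hsq
        · apply Subtype.ext
          dsimp only
          simp only [Bool.cond_false, Prod.mk.injEq, and_true]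
          omega
      · obtain ⟨u, rfl⟩ : ∃ u, x = 2*u + 3*y + 1 := ⟨(x-3*y-1)/2, by omega⟩
        have h4 : 4*((a:ℤ)*u^2 + 3*(a:ℤ)*(u+2*y+1)^2 + (b:ℤ)*(2*z+1)^2)
            = 4*(8*(n:ℤ) + 13*(a:ℤ) + (b:ℤ)) := by linear_combination -h8
        have hsq := mul_left_cancel₀ (by norm_num : (4:ℤ) ≠ 0) h4
        have hd := extract (a:ℤ) b n 13 u (u+2*y+1) (2*z+1) ha (by omega) hsq
        obtain ⟨hu2, hv4⟩ := key13 u (u+2*y+1) hd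
        obtain ⟨p, rfl⟩ : ∃ p, u = 2*p+1 := ⟨(u-1)/2, by omega⟩
        obtain ⟨q, rfl⟩ : ∃ q, y = 2*q - p := ⟨(y+p)/2, by omega⟩
        refine ⟨(true, ⟨(p, q, z), ?_⟩), ?_⟩
        · push_cast
          refine sq_to_tri _ _ _ _ _ _ _ ?_
          linear_combination -hsq
        · apply Subtype.ext
          dsimp only
          simp only [Bool.cond_true, Prod.mk.injEq, and_true]
          omega
  unfold t
  rw [Nat.card_congr e.symm, Nat.card_prod]
  simp [Nat.card_eq_fintype_card]

lemma mem2 (A B m p q r y : ℤ) (hy : y = 2*q - p ∨ y = p - 2*q - 1)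
    (h : m = 3*A * tri p + 4*A * tri q + B * tri r) :
    4*m + 3*A = A * tri (3*p + 2*q + 2) + 3*A * tri y + 4*B * tri r := by
  have h8 := tri_to_sq (3*A) (4*A) B m p q r h
  refine sq_to_tri _ _ _ _ _ _ _ ?_
  rcases hy with rfl | rfl <;> linear_combination 4 * h8

lemma part2 (a b n : ℕ) (ha : (a:ℤ) % 2 = 1) :
    t a (3*a) (4*b) (4*n+3*a) = 2 * t (3*a) (4*a) b n := by
  have e : (Bool × {p : ℤ × ℤ × ℤ // ((n:ℕ) : ℤ) = ↑(3*a) * tri p.1 + ↑(4*a) * tri p.2.1 + ↑b * tri p.2.2}) ≃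
      {p : ℤ × ℤ × ℤ // ((4*n+3*a : ℕ) : ℤ) = ↑a * tri p.1 + ↑(3*a) * tri p.2.1 + ↑(4*b) * tri p.2.2} := by
    refine Equiv.ofBijective (fun w =>
      ⟨(3*w.2.1.1 + 2*w.2.1.2.1 + 2,
        cond w.1 (w.2.1.1 - 2*w.2.1.2.1 - 1) (2*w.2.1.2.1 - w.2.1.1),
        w.2.1.2.2), ?_⟩) ⟨?_, ?_⟩
    · obtain ⟨ε, ⟨⟨p,q,r⟩, h⟩⟩ := w
      push_cast at h ⊢
      have h' : (n:ℤ) = 3*(a:ℤ) * tri p + 4*(a:ℤ) * tri q + (b:ℤ) * tri r := by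
        linear_combination h
      cases ε <;> simp only [Bool.cond_true, Bool.cond_false] <;>
        [ linear_combination mem2 (a:ℤ) b n p q r _ (Or.inl rfl) h';
          linear_combination mem2 (a:ℤ) b n p q r _ (Or.inr rfl) h' ]
    · rintro ⟨ε1, ⟨⟨p,q,r⟩, h1⟩⟩ ⟨ε2, ⟨⟨p',q',r'⟩, h2⟩⟩ heq
      simp only [Subtype.mk.injEq, Prod.mk.injEq] at heq
      cases ε1 <;> cases ε2 <;>
        simp only [Bool.cond_true, Bool.cond_false] at heq <;>
        simp only [Prod.mk.injEq, Subtype.mk.injEq, Bool.false_eq_true, Bool.true_eq_false,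
          false_and, true_and] <;>
        omega
    · rintro ⟨⟨x,y,z⟩, hxyz⟩
      push_cast at hxyz
      have h8 := tri_to_sq (a:ℤ) (3*(a:ℤ)) (4*(b:ℤ)) (4*(n:ℤ)+3*(a:ℤ)) x y z (by linear_combination hxyz)
      by_cases hpar : (x + y) % 2 = 0
      · obtain ⟨u, rfl⟩ : ∃ u, x = 2*u - 3*y - 2 := ⟨(x+3*y+2)/2, by omega⟩
        have h4 : 4*((a:ℤ)*u^2 + 3*(a:ℤ)*(u-2*y-1)^2 + (b:ℤ)*(2*z+1)^2)
            = 4*(8*(n:ℤ) + 7*(a:ℤ) + (b:ℤ)) := by linear_combination -h8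
        have hsq := mul_left_cancel₀ (by norm_num : (4:ℤ) ≠ 0) h4
        have hd := extract (a:ℤ) b n 7 u (u-2*y-1) (2*z+1) ha (by omega) hsq
        obtain ⟨hu4, hv2⟩ := key7 u (u-2*y-1) hd
        obtain ⟨q, rfl⟩ : ∃ q, u = 4*q+2 := ⟨(u-2)/4, by omega⟩
        obtain ⟨p, rfl⟩ : ∃ p, y = 2*q - p := ⟨2*q - y, by omega⟩
        refine ⟨(false, ⟨(p, q, z), ?_⟩), ?_⟩
        · push_cast
          refine sq_to_tri _ _ _ _ _ _ _ ?_
          linear_combination -hsq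
        · apply Subtype.ext
          dsimp only
          simp only [Bool.cond_false, Prod.mk.injEq, and_true]
          omega
      · obtain ⟨u, rfl⟩ : ∃ u, x = 2*u + 3*y + 1 := ⟨(x-3*y-1)/2, by omega⟩
        have h4 : 4*((a:ℤ)*u^2 + 3*(a:ℤ)*(u+2*y+1)^2 + (b:ℤ)*(2*z+1)^2)
            = 4*(8*(n:ℤ) + 7*(a:ℤ) + (b:ℤ)) := by linear_combination -h8
        have hsq := mul_left_cancel₀ (by norm_num : (4:ℤ) ≠ 0) h4
        have hd := extract (a:ℤ) b n 7 u (u+2*y+1) (2*z+1) ha (by omega) hsq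
        obtain ⟨hu4, hv2⟩ := key7 u (u+2*y+1) hd
        obtain ⟨q, rfl⟩ : ∃ q, u = 4*q+2 := ⟨(u-2)/4, by omega⟩
        obtain ⟨p, rfl⟩ : ∃ p, y = p - 2*q - 1 := ⟨y+2*q+1, by omega⟩
        refine ⟨(true, ⟨(p, q, z), ?_⟩), ?_⟩
        · push_cast
          refine sq_to_tri _ _ _ _ _ _ _ ?_
          linear_combination -hsq
        · apply Subtype.ext
          dsimp only
          simp only [Bool.cond_true, Prod.mk.injEq, and_true]
          omega
  unfold t
  rw [Nat.card_congr e.symm, Nat.card_prod]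
  simp [Nat.card_eq_fintype_card]

theorem stmt13 (a b : ℕ) (ha : 0 < a) (hb : 0 < b) (hodd : Odd a) (n : ℕ) :
    t a (3 * a) (4 * b) (4 * n + 6 * a) = 2 * t a (12 * a) b n ∧
    t a (3 * a) (4 * b) (4 * n + 3 * a) = 2 * t (3 * a) (4 * a) b n := by
  obtain ⟨k, hk⟩ := hodd
  have ha' : (a:ℤ) % 2 = 1 := by subst hk; push_cast; omega
  exact ⟨part1 a b n ha', part2 a b n ha'⟩
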